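/- arXiv:2006.09059 — 2 statements merged into one kernel-verified Lean document; each statement's English description precedes it below -/
import Mathlib

section
/- For ξ ~ Multinomial(m, x) and distinct indices i ≠ ℓ, the joint fourth central moment satisfies E[(ξ_i − m x_i)^2 (ξ_ℓ − m x_ℓ)^2] = (3 m^2 − 6 m) x_i^2 x_ℓ^2 + m^2 (x_i^2 x_ℓ + x_i x_ℓ^2) − (2 m^2 − 2 m)(x_i^2 x_ℓ + x_i x_ℓ^2) + (m^2 − m) x_i x_ℓ. -/
open Finset

/-- The probability mass function of the Multinomial(m, x) distribution on the
d-dimensional simplex, evaluated at k ∈ ℕ₀^d. -/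
noncomputable def multinomialPMF (d m : ℕ) (x : Fin d → ℝ) (k : Fin d → ℕ) : ℝ :=
  (Nat.factorial m : ℝ) /
      ((Nat.factorial (m - ∑ i, k i) : ℝ) * ∏ i, (Nat.factorial (k i) : ℝ)) *
    (1 - ∑ i, x i) ^ (m - ∑ i, k i) * ∏ i, x i ^ k i

/-- Expectation of f(ξ) for ξ ~ Multinomial(m, x): the sum of f(k) * P(ξ = k)
over all k ∈ ℕ₀^d with ∑ i, k i ≤ m. -/
noncomputable def multinomialExp (d m : ℕ) (x : Fin d → ℝ) (f : (Fin d → ℕ) → ℝ) : ℝ :=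
  ∑ k ∈ Finset.univ.filter (fun k : Fin d → Fin (m + 1) => ∑ i, (k i : ℕ) ≤ m),
    f (fun i => (k i : ℕ)) * multinomialPMF d m x (fun i => (k i : ℕ))

/-!
Writing `(t - c)² = t(t - 1) + (1 - 2c)·t + c²` in falling factorials reduces the claim to the
factorial moments `E[∏ⱼ (ξⱼ)_(rⱼ)] = m_(|r|) ∏ⱼ xⱼ^rⱼ`. These follow by shifting the summation
index `k ↦ k + r`: it turns the Multinomial(m, x) weights into `m_(|r|) xʳ` times the
Multinomial(m - |r|, x) weights, which sum to `1` by the multinomial theorem.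
-/

open scoped Nat

namespace Multinomial

def support (d n : ℕ) : Finset (Fin d → ℕ) :=
  (Fintype.piFinset fun _ => range (n + 1)).filter fun k => ∑ j, k j ≤ n

theorem mem_support {d n : ℕ} {k : Fin d → ℕ} : k ∈ support d n ↔ ∑ j, k j ≤ n := by
  simp only [support, mem_filter, Fintype.mem_piFinset, mem_range, and_iff_right_iff_imp]
  exact fun h j =>
    Nat.lt_succ_of_le ((single_le_sum (fun _ _ => Nat.zero_le _) (mem_univ j)).trans h)

theorem multinomialExp_eq_sum_support (d m : ℕ) (x : Fin d → ℝ) (f : (Fin d → ℕ) → ℝ) :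
    multinomialExp d m x f = ∑ k ∈ support d m, f k * multinomialPMF d m x k := by
  refine sum_nbij (fun k j => (k j : ℕ)) (fun k hk => mem_support.2 (mem_filter.1 hk).2)
    (fun k _ l _ h => funext fun j => Fin.ext (congrFun h j)) (fun k hk => ?_) (fun _ _ => rfl)
  obtain ⟨hk_range, hk_sum⟩ := mem_filter.1 hk
  exact ⟨fun j => ⟨k j, mem_range.1 (Fintype.mem_piFinset.1 hk_range j)⟩,
    mem_filter.2 ⟨mem_univ _, hk_sum⟩, rfl⟩

section
variable {d m : ℕ} {x : Fin d → ℝ}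

theorem multinomialExp_sum {ι : Type*} (s : Finset ι) (f : ι → (Fin d → ℕ) → ℝ) :
    multinomialExp d m x (fun k => ∑ a ∈ s, f a k) = ∑ a ∈ s, multinomialExp d m x (f a) := by
  simp only [multinomialExp, sum_mul]
  exact sum_comm

theorem multinomialExp_const_mul (c : ℝ) (f : (Fin d → ℕ) → ℝ) :
    multinomialExp d m x (fun k => c * f k) = c * multinomialExp d m x f := by
  simp only [multinomialExp, mul_sum, mul_assoc]

end

theorem multinomialPMF_eq_factorial_mul (d n : ℕ) (x : Fin d → ℝ) (k : Fin d → ℕ) :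
    multinomialPMF d n x k = n ! * ((1 - ∑ j, x j) ^ (n - ∑ j, k j) / (n - ∑ j, k j)!) *
      ∏ j, (x j ^ k j / (k j)!) := by
  rw [multinomialPMF, prod_div_distrib]
  field_simp

theorem multinomial_mul_prod_pow {ι : Type*} (s : Finset ι) (g : ι → ℕ) (f : ι → ℝ) :
    (Nat.multinomial s g : ℝ) * ∏ j ∈ s, f j ^ g j =
      (∑ j ∈ s, g j)! * ∏ j ∈ s, (f j ^ g j / (g j)!) := by
  rw [← Nat.multinomial_spec, prod_div_distrib]
  push_cast
  field_simp

theorem sum_multinomialPMF (d n : ℕ) (x : Fin d → ℝ) :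
    ∑ k ∈ support d n, multinomialPMF d n x k = 1 := by
  have hmulti := sum_pow_eq_sum_piAntidiag univ (Fin.cons (1 - ∑ j, x j) x : Fin (d + 1) → ℝ) n
  rw [Fin.sum_univ_succ, Fin.cons_zero] at hmulti
  simp only [Fin.cons_succ, sub_add_cancel, one_pow] at hmulti
  rw [hmulti]
  symm
  refine sum_nbij' Fin.tail (fun k => Fin.cons (n - ∑ j, k j) k) (fun g hg => ?_) (fun k hk => ?_)
    (fun g hg => ?_) (fun k _ => Fin.tail_cons _ _) (fun g hg => ?_)
  · simp only [mem_piAntidiag, Fin.sum_univ_succ, mem_univ, implies_true, and_true] at hg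
    exact mem_support.2 (hg ▸ Nat.le_add_left _ _)
  · simp only [mem_piAntidiag, Fin.sum_univ_succ, mem_univ, implies_true, and_true, Fin.cons_zero,
      Fin.cons_succ]
    exact Nat.sub_add_cancel (mem_support.1 hk)
  · simp only [mem_piAntidiag, Fin.sum_univ_succ, mem_univ, implies_true, and_true] at hg
    rw [← hg]
    simp [Fin.tail]
  · simp only [mem_piAntidiag, mem_univ, implies_true, and_true] at hg
    rw [multinomial_mul_prod_pow, multinomialPMF_eq_factorial_mul, Fin.prod_univ_succ, hg]
    rw [Fin.sum_univ_succ] at hg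
    simp only [Fin.cons_zero, Fin.cons_succ, Fin.tail]
    rw [← hg, Nat.add_sub_cancel]
    ring

theorem descFactorial_mul_pow_div_factorial (a b : ℕ) (t : ℝ) :
    ((a + b).descFactorial b : ℝ) * (t ^ (a + b) / (a + b)!) = t ^ b * (t ^ a / a !) := by
  have h := Nat.factorial_mul_descFactorial (Nat.le_add_left b a)
  rw [Nat.add_sub_cancel] at h
  rw [← h, pow_add]
  push_cast
  field_simp

theorem prod_descFactorial_eq_zero_of_not_le {d : ℕ} {k r : Fin d → ℕ} (h : ¬r ≤ k) :
    ∏ j, ((k j).descFactorial (r j) : ℝ) = 0 := by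
  obtain ⟨j, hj⟩ : ∃ j, k j < r j := by simpa [Pi.le_def] using h
  refine prod_eq_zero (mem_univ j) ?_
  rw [Nat.descFactorial_eq_zero_iff_lt.2 hj, Nat.cast_zero]

theorem prod_descFactorial_mul_multinomialPMF_add {d m : ℕ} (x : Fin d → ℝ) {r : Fin d → ℕ}
    (hr : ∑ j, r j ≤ m) (k : Fin d → ℕ) :
    (∏ j, ((k + r) j).descFactorial (r j) : ℝ) * multinomialPMF d m x (k + r) =
      m.descFactorial (∑ j, r j) * (∏ j, x j ^ r j) * multinomialPMF d (m - ∑ j, r j) x k := by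
  have hprod :
      (∏ j, ((k + r) j).descFactorial (r j) : ℝ) * ∏ j, (x j ^ (k + r) j / ((k + r) j)!) =
      (∏ j, x j ^ r j) * ∏ j, (x j ^ k j / (k j)!) := by
    rw [← prod_mul_distrib, ← prod_mul_distrib]
    exact prod_congr rfl fun j _ => descFactorial_mul_pow_div_factorial (k j) (r j) (x j)
  rw [multinomialPMF_eq_factorial_mul, multinomialPMF_eq_factorial_mul,
    ← Nat.factorial_mul_descFactorial hr]
  simp only [Pi.add_apply, sum_add_distrib, add_comm (∑ j, k j), ← Nat.sub_sub] at hprod ⊢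
  rw [mul_left_comm, hprod]
  push_cast
  ring

theorem multinomialExp_prod_descFactorial (d m : ℕ) (x : Fin d → ℝ) (r : Fin d → ℕ) :
    multinomialExp d m x (fun k => ∏ j, ((k j).descFactorial (r j) : ℝ)) =
      m.descFactorial (∑ j, r j) * ∏ j, x j ^ r j := by
  rw [multinomialExp_eq_sum_support]
  by_cases hr : ∑ j, r j ≤ m
  · have hsub : (support d (m - ∑ j, r j)).map (addRightEmbedding r) ⊆ support d m := by
      intro k hk
      obtain ⟨k', hk', rfl⟩ := mem_map.1 hk
      rw [mem_support] at hk' ⊢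
      simp only [addRightEmbedding_apply, Pi.add_apply, sum_add_distrib]
      omega
    have hzero : ∀ k ∈ support d m, k ∉ (support d (m - ∑ j, r j)).map (addRightEmbedding r) →
        (∏ j, ((k j).descFactorial (r j) : ℝ)) * multinomialPMF d m x k = 0 := by
      intro k hk hk'
      rw [prod_descFactorial_eq_zero_of_not_le, zero_mul]
      intro hrk
      refine hk' (mem_map.2 ⟨k - r, mem_support.2 ?_, tsub_add_cancel_of_le hrk⟩)
      rw [Pi.sub_def, sum_tsub_distrib _ fun j _ => hrk j]
      exact Nat.sub_le_sub_right (mem_support.1 hk) _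
    rw [← sum_subset hsub hzero, sum_map]
    simp only [addRightEmbedding_apply, prod_descFactorial_mul_multinomialPMF_add x hr, ← mul_sum,
      sum_multinomialPMF, mul_one]
  · rw [Nat.descFactorial_eq_zero_iff_lt.2 (not_le.1 hr), Nat.cast_zero, zero_mul]
    refine sum_eq_zero fun k hk => ?_
    rw [prod_descFactorial_eq_zero_of_not_le, zero_mul]
    exact fun hrk => hr ((sum_le_sum fun j _ => hrk j).trans (mem_support.1 hk))

theorem prod_single_add_single {ι M : Type*} [Fintype ι] [DecidableEq ι] [CommMonoid M]
    {i ℓ : ι} (hil : i ≠ ℓ) (a b : ℕ) (f : ι → ℕ → M) (hf : ∀ j, f j 0 = 1) :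
    ∏ j, f j ((Pi.single i a + Pi.single ℓ b : ι → ℕ) j) = f i a * f ℓ b := by
  rw [Fintype.prod_eq_mul i ℓ hil fun j hj => by simp [hj.1, hj.2, hf]]
  simp [hil, hil.symm]

theorem multinomialExp_descFactorial_mul_descFactorial (d m : ℕ) (x : Fin d → ℝ) {i ℓ : Fin d}
    (hil : i ≠ ℓ) (a b : ℕ) :
    multinomialExp d m x (fun k => ((k i).descFactorial a : ℝ) * (k ℓ).descFactorial b) =
      m.descFactorial (a + b) * x i ^ a * x ℓ ^ b := by
  have hprod : (fun k : Fin d → ℕ => ((k i).descFactorial a : ℝ) * (k ℓ).descFactorial b) =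
      fun k => ∏ j, ((k j).descFactorial ((Pi.single i a + Pi.single ℓ b : Fin d → ℕ) j) : ℝ) :=
    funext fun k =>
      (prod_single_add_single hil a b (fun j n => ((k j).descFactorial n : ℝ)) fun _ => by
        rw [Nat.descFactorial_zero, Nat.cast_one]).symm
  have hsum : ∑ j, (Pi.single i a + Pi.single ℓ b : Fin d → ℕ) j = a + b := by
    simp [sum_add_distrib]
  rw [hprod, multinomialExp_prod_descFactorial, hsum,
    prod_single_add_single hil a b (fun j n => x j ^ n) fun j => pow_zero _, mul_assoc]

theorem sq_sub_eq_sum_descFactorial (n : ℕ) (c : ℝ) :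
    ((n : ℝ) - c) ^ 2 = ∑ a : Fin 3, ![c ^ 2, 1 - 2 * c, 1] a * n.descFactorial a := by
  simp only [Fin.sum_univ_three, Fin.val_zero, Fin.val_one, Fin.val_two, Nat.descFactorial_zero,
    Nat.descFactorial_one, Nat.cast_descFactorial_two, Matrix.cons_val]
  ring

end Multinomial

open Multinomial

theorem multinomial_fourth_central_moment_two_two_general (d m : ℕ) (x : Fin d → ℝ) (i ℓ : Fin d)
    (hil : i ≠ ℓ) :
    multinomialExp d m x
        (fun k => ((k i : ℝ) - (m : ℝ) * x i) ^ 2 * ((k ℓ : ℝ) - (m : ℝ) * x ℓ) ^ 2) =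
      (3 * (m : ℝ) ^ 2 - 6 * (m : ℝ)) * x i ^ 2 * x ℓ ^ 2 +
        (m : ℝ) ^ 2 * (x i ^ 2 * x ℓ + x i * x ℓ ^ 2) -
        (2 * (m : ℝ) ^ 2 - 2 * (m : ℝ)) * (x i ^ 2 * x ℓ + x i * x ℓ ^ 2) +
        ((m : ℝ) ^ 2 - (m : ℝ)) * x i * x ℓ := by
  have hexpand : (fun k : Fin d → ℕ => ((k i : ℝ) - m * x i) ^ 2 * ((k ℓ : ℝ) - m * x ℓ) ^ 2) =
      fun k => ∑ a : Fin 3, ∑ b : Fin 3, ![(m * x i) ^ 2, 1 - 2 * (m * x i), 1] a *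
        ![(m * x ℓ) ^ 2, 1 - 2 * (m * x ℓ), 1] b *
          ((k i).descFactorial a * (k ℓ).descFactorial b : ℝ) := by
    funext k
    simp only [sq_sub_eq_sum_descFactorial, sum_mul_sum, mul_mul_mul_comm]
  rw [hexpand]
  simp only [multinomialExp_sum, multinomialExp_const_mul,
    multinomialExp_descFactorial_mul_descFactorial d m x hil]
  simp only [Fin.sum_univ_three, Fin.val_zero, Fin.val_one, Fin.val_two, Matrix.cons_val,
    ← descPochhammer_eval_eq_descFactorial ℝ, descPochhammer_succ_eval, descPochhammer_zero,
    Polynomial.eval_one, add_zero]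
  push_cast
  ring

theorem multinomial_fourth_central_moment_two_two (d m : ℕ) (x : Fin d → ℝ) (hx : ∀ i, 0 ≤ x i ∧ x i ≤ 1)
    (hs : ∑ i, x i ≤ 1) (i ℓ : Fin d)
    (hil : i ≠ ℓ) :
    multinomialExp d m x
        (fun k => ((k i : ℝ) - (m : ℝ) * x i) ^ 2 * ((k ℓ : ℝ) - (m : ℝ) * x ℓ) ^ 2) =
      (3 * (m : ℝ) ^ 2 - 6 * (m : ℝ)) * x i ^ 2 * x ℓ ^ 2 +
        (m : ℝ) ^ 2 * (x i ^ 2 * x ℓ + x i * x ℓ ^ 2) -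
        (2 * (m : ℝ) ^ 2 - 2 * (m : ℝ)) * (x i ^ 2 * x ℓ + x i * x ℓ ^ 2) +
        ((m : ℝ) ^ 2 - (m : ℝ)) * x i * x ℓ :=
  multinomial_fourth_central_moment_two_two_general d m x i ℓ hil
end

section
/- For ξ ~ Multinomial(m, x) and pairwise distinct indices i, ℓ, p, the joint fourth central moment satisfies E[(ξ_i − m x_i)^2 (ξ_ℓ − m x_ℓ)(ξ_p − m x_p)] = (3 m^2 − 6 m) x_i^2 x_ℓ x_p + m^2 x_i x_ℓ x_p − (2 m^2 − 2 m) x_i x_ℓ x_p. -/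
open Finset

/-- core nat identity -/
lemma nat_key {α : Type*} (s : Finset α) (r g : α → ℕ) (m : ℕ)
    (hg : ∀ j ∈ s, r j ≤ g j) (hsum : ∑ j ∈ s, g j = m) :
    (∏ j ∈ s, (g j).descFactorial (r j)) * Nat.multinomial s g =
      m.descFactorial (∑ j ∈ s, r j) * Nat.multinomial s (fun j => g j - r j) := by
  set R := ∑ j ∈ s, r j with hR
  have hRm : R ≤ m := hsum ▸ Finset.sum_le_sum hg
  have hsub : ∑ j ∈ s, (g j - r j) = m - R := by
    have := Finset.sum_add_distrib (s := s) (f := fun j => g j - r j) (g := r)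
    have h2 : ∑ j ∈ s, (g j - r j + r j) = m := by
      rw [Finset.sum_congr rfl fun j hj => Nat.sub_add_cancel (hg j hj), hsum]
    omega
  apply Nat.eq_of_mul_eq_mul_right (Finset.prod_pos fun j _ => Nat.factorial_pos (g j - r j))
  calc (∏ j ∈ s, (g j).descFactorial (r j)) * Nat.multinomial s g * ∏ j ∈ s, (g j - r j).factorial
      = (∏ j ∈ s, ((g j - r j).factorial * (g j).descFactorial (r j))) * Nat.multinomial s g := by
        rw [Finset.prod_mul_distrib]; ring
    _ = (∏ j ∈ s, (g j).factorial) * Nat.multinomial s g := by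
        rw [Finset.prod_congr rfl fun j hj => Nat.factorial_mul_descFactorial (hg j hj)]
    _ = m.factorial := by rw [Nat.multinomial_spec, hsum]
    _ = (m - R).factorial * m.descFactorial R := (Nat.factorial_mul_descFactorial hRm).symm
    _ = m.descFactorial R * ((∏ j ∈ s, (g j - r j).factorial) * Nat.multinomial s (fun j => g j - r j)) := by
        rw [Nat.multinomial_spec, hsub]; ring
    _ = m.descFactorial R * Nat.multinomial s (fun j => g j - r j) * ∏ j ∈ s, (g j - r j).factorial := by ring

lemma key {α : Type*} [DecidableEq α] (s : Finset α) (r : α → ℕ) (z : α → ℝ) (m : ℕ) :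
    ∑ g ∈ Finset.piAntidiag s m,
      (∏ j ∈ s, ((g j).descFactorial (r j) : ℝ)) * (Nat.multinomial s g : ℝ) * ∏ j ∈ s, z j ^ g j
    = (m.descFactorial (∑ j ∈ s, r j) : ℝ) * (∏ j ∈ s, z j ^ r j) *
        (∑ j ∈ s, z j) ^ (m - ∑ j ∈ s, r j) := by
  set R := ∑ j ∈ s, r j with hR
  -- drop terms where some g j < r j
  rw [← Finset.sum_filter_add_sum_filter_not (Finset.piAntidiag s m)
    (fun g => ∀ j ∈ s, r j ≤ g j)]
  have hnot : ∑ g ∈ (Finset.piAntidiag s m).filter (fun g => ¬ ∀ j ∈ s, r j ≤ g j),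
      (∏ j ∈ s, ((g j).descFactorial (r j) : ℝ)) * (Nat.multinomial s g : ℝ) * ∏ j ∈ s, z j ^ g j = 0 := by
    apply Finset.sum_eq_zero
    intro g hgmem
    obtain ⟨-, hg⟩ := Finset.mem_filter.mp hgmem
    push_neg at hg
    obtain ⟨j, hjs, hj⟩ := hg
    have : ((g j).descFactorial (r j) : ℝ) = 0 := by
      rw_mod_cast [Nat.descFactorial_eq_zero_iff_lt.mpr (by omega)]
    rw [Finset.prod_eq_zero hjs this, zero_mul, zero_mul]
  rw [hnot, add_zero]
  by_cases hRm : R ≤ m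
  · -- reindex by subtracting r
    rw [show (m.descFactorial R : ℝ) * (∏ j ∈ s, z j ^ r j) * (∑ j ∈ s, z j) ^ (m - R)
        = (m.descFactorial R : ℝ) * (∏ j ∈ s, z j ^ r j) *
          ∑ g ∈ Finset.piAntidiag s (m - R), (Nat.multinomial s g : ℝ) * ∏ j ∈ s, z j ^ g j by
      rw [← Finset.sum_pow_eq_sum_piAntidiag],
      Finset.mul_sum]
    apply Finset.sum_nbij' (i := fun g => fun j => g j - r j)
      (j := fun g => fun j => if j ∈ s then g j + r j else 0)
    · intro g hg
      obtain ⟨hsum, hsupp⟩ := Finset.mem_piAntidiag.mp (Finset.mem_filter.mp hg).1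
      have hle := (Finset.mem_filter.mp hg).2
      rw [Finset.mem_piAntidiag]
      constructor
      · have h2 : ∑ j ∈ s, (g j - r j + r j) = m := by
          rw [Finset.sum_congr rfl fun j hj => Nat.sub_add_cancel (hle j hj), hsum]
        have := Finset.sum_add_distrib (s := s) (f := fun j => g j - r j) (g := r)
        omega
      · intro i hi
        exact hsupp i (fun h0 => hi (by simp [h0]))
    · intro g hg
      obtain ⟨hsum, hsupp⟩ := Finset.mem_piAntidiag.mp hg
      rw [Finset.mem_filter, Finset.mem_piAntidiag]
      refine ⟨⟨?_, ?_⟩, ?_⟩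
      · rw [Finset.sum_congr rfl fun j hj => if_pos hj, Finset.sum_add_distrib, hsum]
        omega
      · intro i hi
        by_cases h : i ∈ s
        · exact h
        · simp [h] at hi
      · intro j hj
        simp [hj]
    · intro g hg
      obtain ⟨hsum, hsupp⟩ := Finset.mem_piAntidiag.mp (Finset.mem_filter.mp hg).1
      have hle := (Finset.mem_filter.mp hg).2
      funext j
      by_cases h : j ∈ s
      · simp only [if_pos h]; exact Nat.sub_add_cancel (hle j h)
      · simp only [if_neg h]
        by_contra h0
        exact h (hsupp j (by omega))
    · intro g hg
      obtain ⟨hsum, hsupp⟩ := Finset.mem_piAntidiag.mp hg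
      funext j
      by_cases h : j ∈ s
      · simp [h]
      · simp only [if_neg h]
        have : g j = 0 := by by_contra h0; exact h (hsupp j h0)
        omega
    · intro g hg
      obtain ⟨hsum, hsupp⟩ := Finset.mem_piAntidiag.mp (Finset.mem_filter.mp hg).1
      have hle := (Finset.mem_filter.mp hg).2
      have hnk := nat_key s r g m hle hsum
      have hz : ∏ j ∈ s, z j ^ g j = (∏ j ∈ s, z j ^ r j) * ∏ j ∈ s, z j ^ (g j - r j) := by
        rw [← Finset.prod_mul_distrib]
        exact Finset.prod_congr rfl fun j hj => by
          rw [← pow_add, Nat.add_sub_cancel' (hle j hj)]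
      rw [hz]
      have : (∏ j ∈ s, ((g j).descFactorial (r j) : ℝ)) * (Nat.multinomial s g : ℝ)
          = (m.descFactorial R : ℝ) * (Nat.multinomial s (fun j => g j - r j) : ℝ) := by
        rw [hR, ← Nat.cast_prod, ← Nat.cast_mul, ← Nat.cast_mul, hnk]
      rw [show (∏ j ∈ s, ((g j).descFactorial (r j) : ℝ)) * (Nat.multinomial s g : ℝ) *
          ((∏ j ∈ s, z j ^ r j) * ∏ j ∈ s, z j ^ (g j - r j))
        = ((∏ j ∈ s, ((g j).descFactorial (r j) : ℝ)) * (Nat.multinomial s g : ℝ)) *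
          ((∏ j ∈ s, z j ^ r j) * ∏ j ∈ s, z j ^ (g j - r j)) by ring, this]
      ring
  · -- R > m : filtered set is empty and RHS descFactorial is zero
    have h1 : (Finset.piAntidiag s m).filter (fun g => ∀ j ∈ s, r j ≤ g j) = ∅ := by
      rw [Finset.filter_eq_empty_iff]
      intro g hg hle
      obtain ⟨hsum, -⟩ := Finset.mem_piAntidiag.mp hg
      exact hRm (hsum ▸ Finset.sum_le_sum hle)
    rw [h1, Nat.descFactorial_eq_zero_iff_lt.mpr (by omega)]
    simp

lemma multinomial_cast_real {α : Type*} (s : Finset α) (g : α → ℕ) :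
    (Nat.multinomial s g : ℝ) = ((∑ j ∈ s, g j).factorial : ℝ) / ∏ j ∈ s, ((g j).factorial : ℝ) := by
  rw [eq_div_iff (by positivity)]
  rw [← Nat.cast_prod, ← Nat.cast_mul, mul_comm, Nat.multinomial_spec]

lemma exp_eq (d m : ℕ) (x : Fin d → ℝ) (f : (Fin d → ℕ) → ℝ) :
    multinomialExp d m x f =
      ∑ g ∈ Finset.piAntidiag (Finset.univ : Finset (Option (Fin d))) m,
        f (fun j => g (some j)) *
          ((Nat.multinomial Finset.univ g : ℝ) *
            ((1 - ∑ t, x t) ^ g none *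
              ∏ j : Fin d, x j ^ g (some j))) := by
  unfold multinomialExp
  apply Finset.sum_nbij'
    (i := fun k => fun o : Option (Fin d) => Option.elim o (m - ∑ j, (k j : ℕ)) (fun j => (k j : ℕ)))
    (j := fun g => fun j : Fin d => (⟨min (g (some j)) m, by omega⟩ : Fin (m + 1)))
  · intro k hk
    have hk' := (Finset.mem_filter.mp hk).2
    rw [Finset.mem_piAntidiag]
    refine ⟨?_, fun _ _ => Finset.mem_univ _⟩
    rw [Fintype.sum_option]
    simp only [Option.elim]
    omega
  · intro g hg
    obtain ⟨hsum, -⟩ := Finset.mem_piAntidiag.mp hg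
    rw [Fintype.sum_option] at hsum
    have hle : ∀ j : Fin d, g (some j) ≤ m := fun j =>
      le_trans (Finset.single_le_sum (f := fun j => g (some j)) (fun _ _ => Nat.zero_le _)
        (Finset.mem_univ j)) (le_trans (Nat.le_add_left _ _) (le_of_eq hsum))
    rw [Finset.mem_filter]
    refine ⟨Finset.mem_univ _, ?_⟩
    calc ∑ j : Fin d, ((⟨min (g (some j)) m, by omega⟩ : Fin (m+1)) : ℕ)
        = ∑ j : Fin d, g (some j) := by
          exact Finset.sum_congr rfl fun j _ => by simp [Nat.min_eq_left (hle j)]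
      _ ≤ m := by omega
  · intro k hk
    have hk' := (Finset.mem_filter.mp hk).2
    have hle : ∀ j : Fin d, (k j : ℕ) ≤ m := fun j =>
      le_trans (Finset.single_le_sum (f := fun j => (k j : ℕ)) (fun _ _ => Nat.zero_le _)
        (Finset.mem_univ j)) hk'
    funext j
    ext
    simp [Nat.min_eq_left (hle j)]
  · intro g hg
    obtain ⟨hsum, -⟩ := Finset.mem_piAntidiag.mp hg
    rw [Fintype.sum_option] at hsum
    funext o
    have hle : ∀ j : Fin d, g (some j) ≤ m := fun j =>
      le_trans (Finset.single_le_sum (f := fun j => g (some j)) (fun _ _ => Nat.zero_le _)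
        (Finset.mem_univ j)) (le_trans (Nat.le_add_left _ _) (le_of_eq hsum))
    match o with
    | none =>
      simp only [Option.elim]
      have : ∀ j : Fin d, (((⟨min (g (some j)) m, by omega⟩ : Fin (m+1))) : ℕ) = g (some j) :=
        fun j => by simp [Nat.min_eq_left (hle j)]
      rw [Finset.sum_congr rfl fun j _ => this j]
      omega
    | some j => simp [Nat.min_eq_left (hle j)]
  · intro k hk
    have hk' := (Finset.mem_filter.mp hk).2
    congr 1
    unfold multinomialPMF
    rw [multinomial_cast_real, Fintype.sum_option, Fintype.prod_option]
    simp only [Option.elim]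
    have : m - ∑ j, (k j : ℕ) + ∑ j, (k j : ℕ) = m := by omega
    rw [this]
    ring

lemma prod_three {M : Type*} [CommMonoid M] {α : Type*} [Fintype α] [DecidableEq α]
    (u v w : α) (huv : u ≠ v) (huw : u ≠ w) (hvw : v ≠ w) (F : α → M)
    (hF : ∀ o, o ≠ u → o ≠ v → o ≠ w → F o = 1) :
    ∏ o : α, F o = F u * F v * F w := by
  rw [← Finset.prod_subset (Finset.subset_univ ({u, v, w} : Finset α))
    (fun o _ ho => hF o (fun h => ho (by simp [h])) (fun h => ho (by simp [h]))
      (fun h => ho (by simp [h])))]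
  rw [show ({u, v, w} : Finset α) = insert u (insert v ({w} : Finset α)) from rfl,
    Finset.prod_insert (by simp [huv, huw]), Finset.prod_insert (by simp [hvw]),
    Finset.prod_singleton, mul_assoc]

lemma sum_three {α : Type*} [Fintype α] [DecidableEq α]
    (u v w : α) (huv : u ≠ v) (huw : u ≠ w) (hvw : v ≠ w) (F : α → ℕ)
    (hF : ∀ o, o ≠ u → o ≠ v → o ≠ w → F o = 0) :
    ∑ o : α, F o = F u + F v + F w := by
  rw [← Finset.sum_subset (Finset.subset_univ ({u, v, w} : Finset α))
    (fun o _ ho => hF o (fun h => ho (by simp [h])) (fun h => ho (by simp [h]))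
      (fun h => ho (by simp [h])))]
  rw [show ({u, v, w} : Finset α) = insert u (insert v ({w} : Finset α)) from rfl,
    Finset.sum_insert (by simp [huv, huw]), Finset.sum_insert (by simp [hvw]),
    Finset.sum_singleton, add_assoc]

lemma momD (d m : ℕ) (x : Fin d → ℝ) (i ℓ p : Fin d)
    (hil : i ≠ ℓ) (hip : i ≠ p) (hlp : ℓ ≠ p) (a b c : ℕ) :
    ∑ g ∈ Finset.piAntidiag (Finset.univ : Finset (Option (Fin d))) m,
      (((g (some i)).descFactorial a : ℝ) * ((g (some ℓ)).descFactorial b : ℝ) *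
        ((g (some p)).descFactorial c : ℝ)) *
        ((Nat.multinomial Finset.univ g : ℝ) *
          ((1 - ∑ t, x t) ^ g none * ∏ j : Fin d, x j ^ g (some j)))
    = (m.descFactorial (a + b + c) : ℝ) * (x i ^ a * x ℓ ^ b * x p ^ c) := by
  classical
  set z : Option (Fin d) → ℝ := fun o => Option.elim o (1 - ∑ t, x t) x with hz
  set r : Option (Fin d) → ℕ := fun o =>
    if o = some i then a else if o = some ℓ then b else if o = some p then c else 0 with hr
  have hi : some i ≠ some ℓ := by simp [hil]
  have hi2 : some i ≠ (some p : Option (Fin d)) := by simp [hip]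
  have hi3 : some ℓ ≠ (some p : Option (Fin d)) := by simp [hlp]
  have hri : r (some i) = a := by simp [hr]
  have hrl : r (some ℓ) = b := by simp [hr, hil.symm]
  have hrp : r (some p) = c := by simp [hr, hip.symm, hlp.symm]
  have hrsum : ∑ o : Option (Fin d), r o = a + b + c := by
    rw [sum_three (some i) (some ℓ) (some p) hi hi2 hi3 r
      (fun o h1 h2 h3 => by simp [hr, h1, h2, h3]), hri, hrl, hrp]
  have hzsum : ∑ o : Option (Fin d), z o = 1 := by
    rw [Fintype.sum_option]; simp [hz]
  have hzprod : ∏ o : Option (Fin d), z o ^ r o = x i ^ a * x ℓ ^ b * x p ^ c := by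
    rw [prod_three (some i) (some ℓ) (some p) hi hi2 hi3 _
      (fun o h1 h2 h3 => by simp [hr, h1, h2, h3]), hri, hrl, hrp]
    simp [hz]
  have hkey := key (Finset.univ : Finset (Option (Fin d))) r z m
  rw [hrsum, hzsum, hzprod, one_pow, mul_one] at hkey
  rw [← hkey]
  apply Finset.sum_congr rfl
  intro g hg
  have hdf : ∏ o : Option (Fin d), ((g o).descFactorial (r o) : ℝ)
      = ((g (some i)).descFactorial a : ℝ) * ((g (some ℓ)).descFactorial b : ℝ) *
        ((g (some p)).descFactorial c : ℝ) := by
    rw [prod_three (some i) (some ℓ) (some p) hi hi2 hi3 _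
      (fun o h1 h2 h3 => by simp [hr, h1, h2, h3]), hri, hrl, hrp]
  have hzg : ∏ o : Option (Fin d), z o ^ g o
      = (1 - ∑ t, x t) ^ g none * ∏ j : Fin d, x j ^ g (some j) := by
    rw [Fintype.prod_option]; simp [hz]
  rw [hdf, hzg]
  ring

lemma dF_succ_cast (m s : ℕ) :
    (m.descFactorial (s + 1) : ℝ) = ((m : ℝ) - s) * (m.descFactorial s : ℝ) := by
  rcases le_or_gt s m with h | h
  · rw [Nat.descFactorial_succ, Nat.cast_mul, Nat.cast_sub h]
  · rw [Nat.descFactorial_eq_zero_iff_lt.mpr h, Nat.descFactorial_eq_zero_iff_lt.mpr (by omega)]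
    simp

lemma dF2_cast (k : ℕ) : ((k.descFactorial 2 : ℕ) : ℝ) = (k : ℝ) ^ 2 - k := by
  rw [show (2 : ℕ) = 1 + 1 from rfl, dF_succ_cast, Nat.descFactorial_one]
  push_cast
  ring

theorem multinomial_fourth_central_moment_two_one_one (d m : ℕ) (x : Fin d → ℝ) (hx : ∀ i, 0 ≤ x i ∧ x i ≤ 1)
    (hs : ∑ i, x i ≤ 1) (i ℓ p : Fin d)
    (hil : i ≠ ℓ) (hip : i ≠ p) (hlp : ℓ ≠ p) :
    multinomialExp d m x
        (fun k => ((k i : ℝ) - (m : ℝ) * x i) ^ 2 * ((k ℓ : ℝ) - (m : ℝ) * x ℓ) *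
          ((k p : ℝ) - (m : ℝ) * x p)) =
      (3 * (m : ℝ) ^ 2 - 6 * (m : ℝ)) * x i ^ 2 * x ℓ * x p + (m : ℝ) ^ 2 * x i * x ℓ * x p -
        (2 * (m : ℝ) ^ 2 - 2 * (m : ℝ)) * x i * x ℓ * x p := by
  classical
  set μ := (m : ℝ) * x i with hmu
  set ν := (m : ℝ) * x ℓ with hnu
  set ρ := (m : ℝ) * x p with hrho
  rw [exp_eq]
  have expand : ∀ g ∈ Finset.piAntidiag (Finset.univ : Finset (Option (Fin d))) m,
      ((((g (some i) : ℕ) : ℝ) - μ) ^ 2 * (((g (some ℓ) : ℕ) : ℝ) - ν) *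
          (((g (some p) : ℕ) : ℝ) - ρ)) *
        ((Nat.multinomial Finset.univ g : ℝ) * ((1 - ∑ t, x t) ^ g none * ∏ j : Fin d, x j ^ g (some j)))
      = (1 : ℝ) * ((((g (some i)).descFactorial 2 : ℝ) * ((g (some ℓ)).descFactorial 1 : ℝ) * ((g (some p)).descFactorial 1 : ℝ)) *
          ((Nat.multinomial Finset.univ g : ℝ) * ((1 - ∑ t, x t) ^ g none * ∏ j : Fin d, x j ^ g (some j))))
        + (1 - 2 * μ) * ((((g (some i)).descFactorial 1 : ℝ) * ((g (some ℓ)).descFactorial 1 : ℝ) * ((g (some p)).descFactorial 1 : ℝ)) *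
          ((Nat.multinomial Finset.univ g : ℝ) * ((1 - ∑ t, x t) ^ g none * ∏ j : Fin d, x j ^ g (some j))))
        + (-ρ) * ((((g (some i)).descFactorial 2 : ℝ) * ((g (some ℓ)).descFactorial 1 : ℝ) * ((g (some p)).descFactorial 0 : ℝ)) *
          ((Nat.multinomial Finset.univ g : ℝ) * ((1 - ∑ t, x t) ^ g none * ∏ j : Fin d, x j ^ g (some j))))
        + (ρ * (2 * μ - 1)) * ((((g (some i)).descFactorial 1 : ℝ) * ((g (some ℓ)).descFactorial 1 : ℝ) * ((g (some p)).descFactorial 0 : ℝ)) *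
          ((Nat.multinomial Finset.univ g : ℝ) * ((1 - ∑ t, x t) ^ g none * ∏ j : Fin d, x j ^ g (some j))))
        + (-ν) * ((((g (some i)).descFactorial 2 : ℝ) * ((g (some ℓ)).descFactorial 0 : ℝ) * ((g (some p)).descFactorial 1 : ℝ)) *
          ((Nat.multinomial Finset.univ g : ℝ) * ((1 - ∑ t, x t) ^ g none * ∏ j : Fin d, x j ^ g (some j))))
        + (ν * (2 * μ - 1)) * ((((g (some i)).descFactorial 1 : ℝ) * ((g (some ℓ)).descFactorial 0 : ℝ) * ((g (some p)).descFactorial 1 : ℝ)) *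
          ((Nat.multinomial Finset.univ g : ℝ) * ((1 - ∑ t, x t) ^ g none * ∏ j : Fin d, x j ^ g (some j))))
        + (ν * ρ) * ((((g (some i)).descFactorial 2 : ℝ) * ((g (some ℓ)).descFactorial 0 : ℝ) * ((g (some p)).descFactorial 0 : ℝ)) *
          ((Nat.multinomial Finset.univ g : ℝ) * ((1 - ∑ t, x t) ^ g none * ∏ j : Fin d, x j ^ g (some j))))
        + (ν * ρ * (1 - 2 * μ)) * ((((g (some i)).descFactorial 1 : ℝ) * ((g (some ℓ)).descFactorial 0 : ℝ) * ((g (some p)).descFactorial 0 : ℝ)) *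
          ((Nat.multinomial Finset.univ g : ℝ) * ((1 - ∑ t, x t) ^ g none * ∏ j : Fin d, x j ^ g (some j))))
        + (μ ^ 2) * ((((g (some i)).descFactorial 0 : ℝ) * ((g (some ℓ)).descFactorial 1 : ℝ) * ((g (some p)).descFactorial 1 : ℝ)) *
          ((Nat.multinomial Finset.univ g : ℝ) * ((1 - ∑ t, x t) ^ g none * ∏ j : Fin d, x j ^ g (some j))))
        + (-(μ ^ 2 * ρ)) * ((((g (some i)).descFactorial 0 : ℝ) * ((g (some ℓ)).descFactorial 1 : ℝ) * ((g (some p)).descFactorial 0 : ℝ)) *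
          ((Nat.multinomial Finset.univ g : ℝ) * ((1 - ∑ t, x t) ^ g none * ∏ j : Fin d, x j ^ g (some j))))
        + (-(μ ^ 2 * ν)) * ((((g (some i)).descFactorial 0 : ℝ) * ((g (some ℓ)).descFactorial 0 : ℝ) * ((g (some p)).descFactorial 1 : ℝ)) *
          ((Nat.multinomial Finset.univ g : ℝ) * ((1 - ∑ t, x t) ^ g none * ∏ j : Fin d, x j ^ g (some j))))
        + (μ ^ 2 * ν * ρ) * ((((g (some i)).descFactorial 0 : ℝ) * ((g (some ℓ)).descFactorial 0 : ℝ) * ((g (some p)).descFactorial 0 : ℝ)) *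
          ((Nat.multinomial Finset.univ g : ℝ) * ((1 - ∑ t, x t) ^ g none * ∏ j : Fin d, x j ^ g (some j)))) := by
    intro g hg
    have h2i := dF2_cast (g (some i))
    simp only [Nat.descFactorial_one, Nat.descFactorial_zero, Nat.cast_one]
    rw [h2i]
    ring
  refine Eq.trans (Finset.sum_congr rfl expand) ?_
  simp only [Finset.sum_add_distrib, ← Finset.mul_sum]
  rw [momD d m x i ℓ p hil hip hlp 2 1 1]
  rw [momD d m x i ℓ p hil hip hlp 1 1 1]
  rw [momD d m x i ℓ p hil hip hlp 2 1 0]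
  rw [momD d m x i ℓ p hil hip hlp 1 1 0]
  rw [momD d m x i ℓ p hil hip hlp 2 0 1]
  rw [momD d m x i ℓ p hil hip hlp 1 0 1]
  rw [momD d m x i ℓ p hil hip hlp 2 0 0]
  rw [momD d m x i ℓ p hil hip hlp 1 0 0]
  rw [momD d m x i ℓ p hil hip hlp 0 1 1]
  rw [momD d m x i ℓ p hil hip hlp 0 1 0]
  rw [momD d m x i ℓ p hil hip hlp 0 0 1]
  rw [momD d m x i ℓ p hil hip hlp 0 0 0]
  have e1 : (m.descFactorial 1 : ℝ) = (m : ℝ) := by rw [Nat.descFactorial_one]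
  have e2 : (m.descFactorial 2 : ℝ) = ((m : ℝ) - 1) * m := by
    rw [show (2 : ℕ) = 1 + 1 from rfl, dF_succ_cast, e1]; norm_num
  have e3 : (m.descFactorial 3 : ℝ) = ((m : ℝ) - 2) * (((m : ℝ) - 1) * m) := by
    rw [show (3 : ℕ) = 2 + 1 from rfl, dF_succ_cast, e2]; norm_num
  have e4 : (m.descFactorial 4 : ℝ) = ((m : ℝ) - 3) * (((m : ℝ) - 2) * (((m : ℝ) - 1) * m)) := by
    rw [show (4 : ℕ) = 3 + 1 from rfl, dF_succ_cast, e3]; norm_num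
  simp only [Nat.reduceAdd, Nat.descFactorial_zero, Nat.cast_one]
  rw [e1, e2, e3, e4, hmu, hnu, hrho]
  ring
end
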